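/- Let (G, v0, c, d, W) be a CARP instance on the complete graph on a finite vertex set V that admits at least one feasible solution, let OPT denote the minimum c-cost of a feasible solution for (G, v0, c, d, W), and let OPT^▼ denote the minimum c^▼-cost of a feasible solution for (G, v0, c^▼, d, W). Then OPT = OPT^▼ + r. -/

import Mathlib

noncomputable section

/-- Cost of a walk: sum of edge costs over its edge traversals,
counted with multiplicity. -/
def walkCost {V : Type*} {G : SimpleGraph V} (γ : Sym2 V → ℝ)
    {u v : V} (p : G.Walk u v) : ℝ :=
  (p.edges.map γ).sum

/-- Minimum `c`-cost of a walk from `u` to `v` in `G`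
(`graphDist G c u u = 0` via the trivial walk). -/
def graphDist {V : Type*} (G : SimpleGraph V) (c : Sym2 V → ℝ) (u v : V) : ℝ :=
  sInf {x : ℝ | ∃ p : G.Walk u v, walkCost c p = x}

/-- A feasible CARP solution on the complete graph on `V` with depot `v0`,
demand function `d` and capacity `W`: a finite family of closed walks, each
through the depot, together with a serving function assigning to each walk a
set of (positive-demand) edges it traverses, of total demand at most `W`,
such that every positive-demand edge is served by exactly one walk.
(Feasibility does not depend on the edge costs.) -/
structure CARPSol (V : Type*) (v0 : V) (d : Sym2 V → ℝ) (W : ℝ) where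
  n : ℕ
  walk : Fin n → (⊤ : SimpleGraph V).Walk v0 v0
  serve : Fin n → Finset (Sym2 V)
  serve_subset : ∀ i, ∀ e ∈ serve i, e ∈ (walk i).edges
  serve_pos : ∀ i, ∀ e ∈ serve i, 0 < d e
  serve_cap : ∀ i, ∑ e ∈ serve i, d e ≤ W
  serve_unique : ∀ e : Sym2 V, 0 < d e → ∃! i, e ∈ serve i

/-- Cost of a CARP solution with respect to an edge-cost function `γ`:
the sum over its walks of their traversal costs. -/
def solCost {V : Type*} {v0 : V} {d : Sym2 V → ℝ} {W : ℝ}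
    (γ : Sym2 V → ℝ) (sol : CARPSol V v0 d W) : ℝ :=
  ∑ i, walkCost γ (sol.walk i)

end

/-!
Along any walk `c ≥ c▼`, and the served edges partition the positive-demand edges, so a
solution costs at least its `c▼`-cost plus `Σ_{d(e) > 0} (c(e) - c▼(e))`, which is `r` because
`c▽ = c` on positive-demand edges and `c▽ = c▼` on those outside `R`. Conversely, rerouting every
unserved edge traversal of a solution along a `c`-shortest path, and keeping one direct traversal
of each served edge, gives a solution whose `c`-cost is exactly that bound.
-/

open SimpleGraph

lemma Finset.sum_le_sum_map_of_subset {α : Type*} [DecidableEq α] {f : α → ℝ}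
    {s : Finset α} {l : List α} (hs : ∀ a ∈ s, a ∈ l) (hf : ∀ a ∈ l, 0 ≤ f a) :
    ∑ a ∈ s, f a ≤ (l.map f).sum := by
  rw [Finset.sum_list_map_count]
  calc ∑ a ∈ s, f a
      ≤ ∑ a ∈ l.toFinset, f a :=
        Finset.sum_le_sum_of_subset_of_nonneg (fun a ha => List.mem_toFinset.2 (hs a ha))
          fun a ha _ => hf a (List.mem_toFinset.1 ha)
    _ ≤ ∑ a ∈ l.toFinset, l.count a • f a := by
        refine Finset.sum_le_sum fun a ha => ?_
        have ha := List.mem_toFinset.1 ha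
        exact le_smul_of_one_le_left (hf a ha) (List.one_le_count_iff.2 ha)

section WalkCost

variable {V : Type*} {G : SimpleGraph V}

@[simp]
lemma walkCost_nil (γ : Sym2 V → ℝ) {u : V} : walkCost γ (Walk.nil : G.Walk u u) = 0 := by
  simp [walkCost]

@[simp]
lemma walkCost_cons (γ : Sym2 V → ℝ) {u v w : V} (h : G.Adj u v) (p : G.Walk v w) :
    walkCost γ (Walk.cons h p) = γ s(u, v) + walkCost γ p := by
  simp [walkCost]

@[simp]
lemma walkCost_append (γ : Sym2 V → ℝ) {u v w : V} (p : G.Walk u v) (q : G.Walk v w) :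
    walkCost γ (p.append q) = walkCost γ p + walkCost γ q := by
  simp [walkCost]

lemma walkCost_sub (γ δ : Sym2 V → ℝ) {u v : V} (p : G.Walk u v) :
    walkCost γ p - walkCost δ p = walkCost (γ - δ) p := by
  induction p with
  | nil => simp
  | cons h p ih => simp only [walkCost_cons, Pi.sub_apply, ← ih]; ring

lemma walkCost_nonneg {γ : Sym2 V → ℝ} (hγ : ∀ e ∈ G.edgeSet, 0 ≤ γ e) {u v : V}
    (p : G.Walk u v) : 0 ≤ walkCost γ p :=
  List.sum_nonneg fun _ hx => by
    obtain ⟨e, he, rfl⟩ := List.mem_map.1 hx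
    exact hγ e (p.edges_subset_edgeSet he)

lemma sum_le_walkCost [DecidableEq V] {γ : Sym2 V → ℝ} (hγ : ∀ e ∈ G.edgeSet, 0 ≤ γ e)
    {u v : V} (p : G.Walk u v) {S : Finset (Sym2 V)} (hS : ∀ e ∈ S, e ∈ p.edges) :
    ∑ e ∈ S, γ e ≤ walkCost γ p :=
  Finset.sum_le_sum_map_of_subset hS fun e he => hγ e (p.edges_subset_edgeSet he)

lemma walkCost_bypass_le [DecidableEq V] {γ : Sym2 V → ℝ} (hγ : ∀ e ∈ G.edgeSet, 0 ≤ γ e)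
    {u v : V} (p : G.Walk u v) : walkCost γ p.bypass ≤ walkCost γ p := by
  rw [walkCost, ← List.sum_toFinset _ p.bypass_isPath.edges_nodup]
  exact sum_le_walkCost hγ p fun e he => p.edges_bypass_subset_edges (List.mem_toFinset.1 he)

end WalkCost

section GraphDist

variable {V : Type*} {G : SimpleGraph V} {c : Sym2 V → ℝ}

lemma graphDist_le_walkCost (hc : ∀ e, 0 ≤ c e) {u v : V} (p : G.Walk u v) :
    graphDist G c u v ≤ walkCost c p :=
  csInf_le ⟨0, by rintro _ ⟨q, rfl⟩; exact walkCost_nonneg (fun e _ => hc e) q⟩ ⟨p, rfl⟩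

lemma graphDist_le_of_adj (hc : ∀ e, 0 ≤ c e) {u v : V} (h : G.Adj u v) :
    graphDist G c u v ≤ c s(u, v) := by
  simpa using graphDist_le_walkCost hc (Walk.cons h Walk.nil)

lemma SimpleGraph.Reachable.exists_walkCost_eq_graphDist [Fintype V] [DecidableEq V]
    [DecidableRel G.Adj] (hc : ∀ e, 0 ≤ c e) {u v : V} (huv : G.Reachable u v) :
    ∃ p : G.Walk u v, walkCost c p = graphDist G c u v := by
  obtain ⟨q⟩ := huv
  obtain ⟨p, -, hp⟩ := Finset.univ.exists_min_image (fun p : G.Path u v => walkCost c p.1)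
    ⟨q.toPath, Finset.mem_univ _⟩
  refine ⟨p.1, le_antisymm ?_ (graphDist_le_walkCost hc _)⟩
  refine le_csInf ⟨_, q, rfl⟩ ?_
  rintro _ ⟨q, rfl⟩
  exact (hp q.toPath (Finset.mem_univ _)).trans (walkCost_bypass_le (fun e _ => hc e) q)

end GraphDist

namespace SimpleGraph.Walk

variable {V : Type*} [DecidableEq V] {G : SimpleGraph V}

/-- Each edge of `S` is traversed directly only at its first occurrence, so it is paid exactly
once; every other traversal `u → w` is replaced by `sp u w`. -/
def rerouteExcept (sp : ∀ u v : V, G.Walk u v) : ∀ {u v : V}, G.Walk u v → Finset (Sym2 V) →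
    G.Walk u v
  | _, _, nil, _ => nil
  | u, _, cons (v := w) h q, S =>
    if s(u, w) ∈ S then cons h (q.rerouteExcept sp (S.erase s(u, w)))
    else (sp u w).append (q.rerouteExcept sp (S.erase s(u, w)))

lemma forall_mem_edges_of_forall_mem_edges_cons {u w v : V} {h : G.Adj u w} {q : G.Walk w v}
    {S : Finset (Sym2 V)} (hS : ∀ e ∈ S, e ∈ (cons h q).edges) :
    ∀ e ∈ S.erase s(u, w), e ∈ q.edges := fun e he =>
  (List.mem_cons.1 (hS e (Finset.mem_of_mem_erase he))).resolve_left (Finset.ne_of_mem_erase he)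

lemma mem_edges_rerouteExcept (sp : ∀ u v : V, G.Walk u v) {u v : V} (p : G.Walk u v)
    {S : Finset (Sym2 V)} (hS : ∀ e ∈ S, e ∈ p.edges) {e : Sym2 V} (he : e ∈ S) :
    e ∈ (p.rerouteExcept sp S).edges := by
  induction p generalizing S with
  | nil => exact absurd (hS e he) List.not_mem_nil
  | @cons u w v h q ih =>
    have ih' := ih (forall_mem_edges_of_forall_mem_edges_cons hS)
    by_cases hmem : s(u, w) ∈ S
    · rw [rerouteExcept, if_pos hmem, edges_cons]
      by_cases heq : e = s(u, w)
      · exact heq ▸ List.mem_cons_self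
      · exact List.mem_cons_of_mem _ (ih' (Finset.mem_erase.2 ⟨heq, he⟩))
    · rw [rerouteExcept, if_neg hmem, edges_append]
      exact List.mem_append_right _ (ih' (Finset.mem_erase.2 ⟨ne_of_mem_of_not_mem he hmem, he⟩))

lemma walkCost_rerouteExcept {γ δ : Sym2 V → ℝ} (sp : ∀ u v : V, G.Walk u v)
    (hsp : ∀ u v : V, walkCost γ (sp u v) = δ s(u, v)) {u v : V} (p : G.Walk u v)
    {S : Finset (Sym2 V)} (hS : ∀ e ∈ S, e ∈ p.edges) :
    walkCost γ (p.rerouteExcept sp S) = walkCost δ p + ∑ e ∈ S, (γ e - δ e) := by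
  induction p generalizing S with
  | nil =>
    rw [Finset.eq_empty_of_forall_notMem fun e he => List.not_mem_nil (hS e he)]
    simp [rerouteExcept]
  | @cons u w v h q ih =>
    have ih' := ih (forall_mem_edges_of_forall_mem_edges_cons hS)
    by_cases hmem : s(u, w) ∈ S
    · rw [rerouteExcept, if_pos hmem, walkCost_cons, walkCost_cons, ih',
        ← Finset.add_sum_erase S _ hmem]
      ring
    · rw [rerouteExcept, if_neg hmem, walkCost_append, hsp, walkCost_cons, ih',
        Finset.erase_eq_of_notMem hmem]
      ring

end SimpleGraph.Walk

lemma ciInf_eq_ciInf_add_of_le_of_exists_eq {ι : Type*} [Nonempty ι] {f g : ι → ℝ} {r : ℝ}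
    (hg : BddBelow (Set.range g)) (hle : ∀ i, g i + r ≤ f i) (hex : ∀ i, ∃ j, f j = g i + r) :
    ⨅ i, f i = (⨅ i, g i) + r := by
  obtain ⟨b, hb⟩ := hg
  have hf : BddBelow (Set.range f) :=
    ⟨b + r, Set.forall_mem_range.2 fun i => (add_le_add_left (hb ⟨i, rfl⟩) r).trans (hle i)⟩
  refine le_antisymm ?_ (le_ciInf fun i => (add_le_add_left (ciInf_le ⟨b, hb⟩ i) r).trans (hle i))
  rw [← sub_le_iff_le_add]
  refine le_ciInf fun i => ?_
  obtain ⟨j, hj⟩ := hex i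
  linarith [ciInf_le hf j]

namespace CARPSol

variable {V : Type*} [Fintype V] [DecidableEq V] {v0 : V} {d : Sym2 V → ℝ} {W : ℝ}

lemma sum_sum_serve (sol : CARPSol V v0 d W) (f : Sym2 V → ℝ) :
    ∑ i, ∑ e ∈ sol.serve i, f e = ∑ e ∈ Finset.univ.filter (fun e => 0 < d e), f e := by
  have hserved : ∀ e ∈ Finset.univ.filter (fun e => 0 < d e),
      ∑ i, (if e ∈ sol.serve i then f e else 0) = f e := by
    intro e he
    obtain ⟨i, hi, huniq⟩ := sol.serve_unique e (Finset.mem_filter.1 he).2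
    rw [Finset.sum_eq_single_of_mem i (Finset.mem_univ i)
      fun j _ hji => if_neg fun hj => hji (huniq j hj), if_pos hi]
  rw [← Finset.sum_congr rfl hserved, Finset.sum_comm]
  refine Finset.sum_congr rfl fun i _ => ?_
  rw [← Finset.sum_filter, Finset.filter_mem_eq_inter,
    Finset.inter_eq_right.2 fun e he => Finset.mem_filter.2 ⟨Finset.mem_univ e, sol.serve_pos i e he⟩]

lemma solCost_add_sum_le {γ δ : Sym2 V → ℝ}
    (hδγ : ∀ e ∈ (⊤ : SimpleGraph V).edgeSet, δ e ≤ γ e) (sol : CARPSol V v0 d W) :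
    solCost δ sol + ∑ e ∈ Finset.univ.filter (fun e => 0 < d e), (γ e - δ e) ≤ solCost γ sol := by
  rw [← sum_sum_serve sol, ← le_sub_iff_add_le', solCost, solCost, ← Finset.sum_sub_distrib]
  refine Finset.sum_le_sum fun i _ => ?_
  rw [walkCost_sub]
  exact sum_le_walkCost (fun e he => sub_nonneg.2 (hδγ e he)) _ (sol.serve_subset i)

def reroute (sol : CARPSol V v0 d W) (sp : ∀ u v : V, (⊤ : SimpleGraph V).Walk u v) :
    CARPSol V v0 d W where
  n := sol.n
  walk i := (sol.walk i).rerouteExcept sp (sol.serve i)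
  serve := sol.serve
  serve_subset i _ he := (sol.walk i).mem_edges_rerouteExcept sp (sol.serve_subset i) he
  serve_pos := sol.serve_pos
  serve_cap := sol.serve_cap
  serve_unique := sol.serve_unique

lemma solCost_reroute {γ δ : Sym2 V → ℝ} (sol : CARPSol V v0 d W)
    (sp : ∀ u v : V, (⊤ : SimpleGraph V).Walk u v)
    (hsp : ∀ u v : V, walkCost γ (sp u v) = δ s(u, v)) :
    solCost γ (sol.reroute sp) =
      solCost δ sol + ∑ e ∈ Finset.univ.filter (fun e => 0 < d e), (γ e - δ e) := by
  rw [← sum_sum_serve sol, solCost, solCost, ← Finset.sum_add_distrib]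
  exact Finset.sum_congr rfl fun i _ =>
    (sol.walk i).walkCost_rerouteExcept sp hsp (sol.serve_subset i)

end CARPSol

theorem opt_eq_optBlackDown_add_r_general {V : Type*} [Fintype V] [DecidableEq V]
    (v0 : V) (c d : Sym2 V → ℝ) (W : ℝ)
    (hc : ∀ e, 0 ≤ c e)
    (cDn cBk : Sym2 V → ℝ)
    (hDn : ∀ u v : V, cDn s(u, v) =
      if 0 < d s(u, v) then c s(u, v) else graphDist (⊤ : SimpleGraph V) c u v)
    (hBk : ∀ u v : V, cBk s(u, v) = graphDist (⊤ : SimpleGraph V) c u v)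
    (hfeas : Nonempty (CARPSol V v0 d W)) :
    sInf {x : ℝ | ∃ sol : CARPSol V v0 d W, solCost c sol = x} =
      sInf {x : ℝ | ∃ sol : CARPSol V v0 d W, solCost cBk sol = x} +
        ∑ e ∈ Finset.univ.filter (fun e : Sym2 V => 0 < d e ∧ cDn e ≠ cBk e),
          (cDn e - cBk e) := by
  choose sp hsp using fun u v : V =>
    (preconnected_top u v).exists_walkCost_eq_graphDist (c := c) hc
  have hsp' (u v : V) : walkCost c (sp u v) = cBk s(u, v) := (hsp u v).trans (hBk u v).symm
  have hBk_le : ∀ e ∈ (⊤ : SimpleGraph V).edgeSet, cBk e ≤ c e := by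
    intro e he
    induction e using Sym2.ind with
    | _ u v => exact (hBk u v).trans_le (graphDist_le_of_adj hc he)
  have hBk_nonneg (e : Sym2 V) : 0 ≤ cBk e := by
    induction e using Sym2.ind with
    | _ u v => exact hsp' u v ▸ walkCost_nonneg (fun e _ => hc e) (sp u v)
  have hr : ∑ e ∈ Finset.univ.filter (fun e : Sym2 V => 0 < d e ∧ cDn e ≠ cBk e),
      (cDn e - cBk e) = ∑ e ∈ Finset.univ.filter (fun e => 0 < d e), (c e - cBk e) := by
    have hDn_pos (e : Sym2 V) (he : 0 < d e) : cDn e = c e := by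
      induction e using Sym2.ind with
      | _ u v => rw [hDn, if_pos he]
    rw [← Finset.filter_filter, Finset.sum_filter_of_ne fun e _ h => sub_ne_zero.1 h]
    exact Finset.sum_congr rfl fun e he => by rw [hDn_pos e (Finset.mem_filter.1 he).2]
  show ⨅ sol, solCost c sol = (⨅ sol, solCost cBk sol) + _
  rw [hr]
  exact ciInf_eq_ciInf_add_of_le_of_exists_eq
    ⟨0, Set.forall_mem_range.2 fun sol =>
      Finset.sum_nonneg fun i _ => walkCost_nonneg (fun e _ => hBk_nonneg e) _⟩
    (CARPSol.solCost_add_sum_le hBk_le) fun sol => ⟨sol.reroute sp, sol.solCost_reroute sp hsp'⟩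

/-- if the CARP instance admits a feasible solution, then the
minimum `c`-cost `OPT` of a feasible solution equals the minimum `c▼`-cost
`OPT▼` of a feasible solution plus `r = Σ_{e ∈ R} (c▽(e) - c▼(e))`. -/
theorem opt_eq_optBlackDown_add_r {V : Type*} [Fintype V] [DecidableEq V]
    (v0 : V) (c d : Sym2 V → ℝ) (W : ℝ)
    (hc : ∀ e, 0 ≤ c e) (hd : ∀ e, 0 ≤ d e) (hW : 0 ≤ W)
    (cDn cBk : Sym2 V → ℝ)
    (hDn : ∀ u v : V, cDn s(u, v) =
      if 0 < d s(u, v) then c s(u, v) else graphDist (⊤ : SimpleGraph V) c u v)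
    (hBk : ∀ u v : V, cBk s(u, v) = graphDist (⊤ : SimpleGraph V) c u v)
    (hfeas : Nonempty (CARPSol V v0 d W)) :
    sInf {x : ℝ | ∃ sol : CARPSol V v0 d W, solCost c sol = x} =
      sInf {x : ℝ | ∃ sol : CARPSol V v0 d W, solCost cBk sol = x} +
        ∑ e ∈ Finset.univ.filter (fun e : Sym2 V => 0 < d e ∧ cDn e ≠ cBk e),
          (cDn e - cBk e) :=
  opt_eq_optBlackDown_add_r_general v0 c d W hc cDn cBk hDn hBk hfeas
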